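/- Let μ be the Lie bracket on ℝ^7 with nonzero basis brackets [e1,e2]=e3, [e1,e3]=e4, [e1,e4]=e6, [e1,e6]=e7, [e2,e3]=e5, [e2,e5]=e6, [e2,e6]=e7, [e3,e4]=-e7, [e3,e5]=e7, and let μ̃ be the Lie bracket on ℝ^7 with nonzero basis brackets [e1,e2]=e3, [e1,e3]=e4, [e1,e4]=e6, [e1,e6]=e7, [e2,e3]=e5, [e2,e5]=e6, [e3,e5]=e7. Let g : ℝ^7 → ℝ^7 be the linear map whose matrix in the standard basis is (1/8)·[[4,4,0,0,0,0,0],[-4,4,0,0,0,0,0],[0,0,4,0,0,0,0],[0,0,0,2,2,0,0],[0,0,0,-2,2,0,0],[0,0,0,0,0,2,0],[0,0,0,0,0,0,1]]. Then g is invertible and g(μ(x,y)) = μ̃(g x, g y) for all x,y ∈ ℝ^7; in particular g is a Lie algebra isomorphism from (ℝ^7,μ) onto (ℝ^7,μ̃). -/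

import Mathlib

open Finset

noncomputable section

/-- `ℝ⁷` with its standard basis and standard inner product. -/
abbrev V7 : Type := Fin 7 → ℝ

/-- The standard basis vector `e i`. -/
def e (i : Fin 7) : V7 := Pi.single i 1

/-- The standard inner product on `ℝ⁷`. -/
def dot (x y : V7) : ℝ := ∑ i, x i * y i

/-- Structure constants built from a list of entries `(i, j, k, a)`, each meaning that
`μ (e i) (e j)` has component `a` along `e k` (and `μ (e j) (e i)` has component `-a`);
all unlisted basis brackets are `0`. -/
def toC (L : List (Fin 7 × Fin 7 × Fin 7 × ℝ)) (i j k : Fin 7) : ℝ :=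
  (L.map fun t =>
      (if t.1 = i ∧ t.2.1 = j ∧ t.2.2.1 = k then t.2.2.2 else 0)
    - (if t.1 = j ∧ t.2.1 = i ∧ t.2.2.1 = k then t.2.2.2 else 0)).sum

/-- The bilinear skew-symmetric map on `ℝ⁷` with structure constants `c`. -/
def br (c : Fin 7 → Fin 7 → Fin 7 → ℝ) (x y : V7) : V7 :=
  fun k => ∑ i, ∑ j, x i * y j * c i j k

lemma br_add_left (c : Fin 7 → Fin 7 → Fin 7 → ℝ) (x x' y : V7) :
    br c (x + x') y = br c x y + br c x' y := by
  funext k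
  simp only [br, Pi.add_apply, ← Finset.sum_add_distrib]
  exact Finset.sum_congr rfl fun i _ => Finset.sum_congr rfl fun j _ => by ring

lemma br_smul_left (c : Fin 7 → Fin 7 → Fin 7 → ℝ) (r : ℝ) (x y : V7) :
    br c (r • x) y = r • br c x y := by
  funext k
  simp only [br, Pi.smul_apply, smul_eq_mul, Finset.mul_sum]
  exact Finset.sum_congr rfl fun i _ => Finset.sum_congr rfl fun j _ => by ring

lemma br_add_right (c : Fin 7 → Fin 7 → Fin 7 → ℝ) (x y y' : V7) :
    br c x (y + y') = br c x y + br c x y' := by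
  funext k
  simp only [br, Pi.add_apply, ← Finset.sum_add_distrib]
  exact Finset.sum_congr rfl fun i _ => Finset.sum_congr rfl fun j _ => by ring

lemma br_smul_right (c : Fin 7 → Fin 7 → Fin 7 → ℝ) (r : ℝ) (x y : V7) :
    br c x (r • y) = r • br c x y := by
  funext k
  simp only [br, Pi.smul_apply, smul_eq_mul, Finset.mul_sum]
  exact Finset.sum_congr rfl fun i _ => Finset.sum_congr rfl fun j _ => by ring

lemma br_zero_left (c : Fin 7 → Fin 7 → Fin 7 → ℝ) (y : V7) : br c 0 y = 0 := by
  funext k; simp [br]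

lemma br_zero_right (c : Fin 7 → Fin 7 → Fin 7 → ℝ) (x : V7) : br c x 0 = 0 := by
  funext k; simp [br]

/-- The space of derivations of the algebra `(ℝ⁷, br c)`, i.e. the linear maps `D` with
`D (μ x y) = μ (D x) y + μ x (D y)` for all `x, y`, as a submodule of the endomorphisms. -/
def derivations (c : Fin 7 → Fin 7 → Fin 7 → ℝ) : Submodule ℝ (Module.End ℝ V7) where
  carrier := {D | ∀ x y, D (br c x y) = br c (D x) y + br c x (D y)}
  add_mem' := by
    intro D E hD hE x y
    simp only [LinearMap.add_apply, hD x y, hE x y, br_add_left, br_add_right]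
    abel
  zero_mem' := by
    intro x y
    simp [br_zero_left, br_zero_right]
  smul_mem' := by
    intro r D hD x y
    simp only [LinearMap.smul_apply, hD x y, smul_add, br_smul_left, br_smul_right]

/-- The Jacobi identity for the bracket `br c`. -/
def Jacobi (c : Fin 7 → Fin 7 → Fin 7 → ℝ) : Prop :=
  ∀ x y z : V7, br c (br c x y) z + br c (br c y z) x + br c (br c z x) y = 0

/-- Skew-symmetry of the bracket `br c`. -/
def Skew (c : Fin 7 → Fin 7 → Fin 7 → ℝ) : Prop :=
  ∀ x y : V7, br c x y = - br c y x

/-- The diagonal endomorphism `diag (a 1, …, a 7)` of `ℝ⁷`, `e i ↦ a i • e i`. -/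
def diagL (a : Fin 7 → ℝ) : Module.End ℝ V7 :=
  LinearMap.pi fun i => a i • LinearMap.proj i

/-- Structure constants of `μ`: `[e1,e2]=e3, [e1,e3]=e4, [e1,e4]=e6, [e1,e6]=e7,
[e2,e3]=e5, [e2,e5]=e6, [e2,e6]=e7, [e3,e4]=-e7, [e3,e5]=e7`. -/
def cmu : Fin 7 → Fin 7 → Fin 7 → ℝ :=
  toC [(0, 1, 2, (1:ℝ)),
   (0, 2, 3, 1),
   (0, 3, 5, 1),
   (0, 5, 6, 1),
   (1, 2, 4, 1),
   (1, 4, 5, 1),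
   (1, 5, 6, 1),
   (2, 3, 6, -1),
   (2, 4, 6, 1)]

/-- Structure constants of `μ̃`: `[e1,e2]=e3, [e1,e3]=e4, [e1,e4]=e6, [e1,e6]=e7,
[e2,e3]=e5, [e2,e5]=e6, [e3,e5]=e7`. -/
def cmt : Fin 7 → Fin 7 → Fin 7 → ℝ :=
  toC [(0, 1, 2, (1:ℝ)),
   (0, 2, 3, 1),
   (0, 3, 5, 1),
   (0, 5, 6, 1),
   (1, 2, 4, 1),
   (1, 4, 5, 1),
   (2, 4, 6, 1)]

/-- The linear map `g` with the given matrix in the standard basis. -/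
def g : Module.End ℝ V7 :=
  Matrix.toLin' ((1/8 : ℝ) •
    !![ 4, 4, 0, 0, 0, 0, 0;
       -4, 4, 0, 0, 0, 0, 0;
        0, 0, 4, 0, 0, 0, 0;
        0, 0, 0, 2, 2, 0, 0;
        0, 0, 0,-2, 2, 0, 0;
        0, 0, 0, 0, 0, 2, 0;
        0, 0, 0, 0, 0, 0, 1])


lemma br_toC_apply (L : List (Fin 7 × Fin 7 × Fin 7 × ℝ)) (x y : V7) (k : Fin 7) :
    br (toC L) x y k =
      (L.map fun t =>
        if t.2.2.1 = k then (x t.1 * y t.2.1 - x t.2.1 * y t.1) * t.2.2.2 else 0).sum := by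
  induction L with
  | nil => simp [br, toC]
  | cons t L ih =>
    obtain ⟨a, b, c, r⟩ := t
    rw [List.map_cons, List.sum_cons, ← ih]
    simp only [br, toC, List.map_cons, List.sum_cons, mul_add, sum_add_distrib, mul_sub,
      sum_sub_distrib, ite_and, mul_ite, mul_zero, sum_ite_irrel, sum_ite_eq, mem_univ,
      ↓reduceIte, sum_const_zero]
    split_ifs <;> ring

lemma br_cmu (x y : V7) : br cmu x y = ![0, 0,
    x 0 * y 1 - x 1 * y 0,
    x 0 * y 2 - x 2 * y 0,
    x 1 * y 2 - x 2 * y 1,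
    x 0 * y 3 - x 3 * y 0 + x 1 * y 4 - x 4 * y 1,
    x 0 * y 5 - x 5 * y 0 + x 1 * y 5 - x 5 * y 1
      - x 2 * y 3 + x 3 * y 2 + x 2 * y 4 - x 4 * y 2] := by
  funext k
  fin_cases k <;>
    simp only [cmu, br_toC_apply, List.map_cons, List.map_nil, List.sum_cons, List.sum_nil,
      Fin.isValue, Fin.reduceFinMk, Fin.reduceEq, ↓reduceIte, Matrix.cons_val] <;>
    ring

lemma br_cmt (x y : V7) : br cmt x y = ![0, 0,
    x 0 * y 1 - x 1 * y 0,
    x 0 * y 2 - x 2 * y 0,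
    x 1 * y 2 - x 2 * y 1,
    x 0 * y 3 - x 3 * y 0 + x 1 * y 4 - x 4 * y 1,
    x 0 * y 5 - x 5 * y 0 + x 2 * y 4 - x 4 * y 2] := by
  funext k
  fin_cases k <;>
    simp only [cmt, br_toC_apply, List.map_cons, List.map_nil, List.sum_cons, List.sum_nil,
      Fin.isValue, Fin.reduceFinMk, Fin.reduceEq, ↓reduceIte, Matrix.cons_val] <;>
    ring

lemma g_apply (x : V7) : g x = ![(x 0 + x 1) / 2, (x 1 - x 0) / 2, x 2 / 2,
    (x 3 + x 4) / 4, (x 4 - x 3) / 4, x 5 / 4, x 6 / 8] := by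
  funext i
  fin_cases i <;>
    simp only [g, Matrix.toLin'_apply, Matrix.mulVec, dotProduct, Fin.sum_univ_seven,
      Matrix.smul_apply, Matrix.of_apply, Matrix.cons_val', Matrix.cons_val,
      Matrix.cons_val_fin_one, Fin.isValue, Fin.reduceFinMk] <;>
    ring

lemma g_injective : Function.Injective g := by
  refine (injective_iff_map_eq_zero g).2 fun x hx => ?_
  rw [g_apply] at hx
  simp only [funext_iff, Fin.forall_fin_succ, Matrix.cons_val_zero, Matrix.cons_val_succ,
    Pi.zero_apply] at hx
  obtain ⟨h0, h1, h2, h3, h4, h5, h6, -⟩ := hx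
  funext i
  fin_cases i <;>
    simp only [Fin.isValue, Fin.reduceFinMk, Fin.zero_eta, Fin.mk_one, Pi.zero_apply] <;>
    linarith

/-- `g` is invertible and satisfies `g (μ x y) = μ̃ (g x) (g y)` for all `x, y`;
in particular `g` is a Lie algebra isomorphism from `(ℝ⁷, μ)` onto `(ℝ⁷, μ̃)`. -/
theorem stmt :
    Function.Bijective g ∧ ∀ x y : V7, g (br cmu x y) = br cmt (g x) (g y) := by
  refine ⟨⟨g_injective, LinearMap.injective_iff_surjective.1 g_injective⟩, fun x y => ?_⟩
  rw [g_apply, br_cmu, br_cmt, g_apply, g_apply]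
  funext k
  fin_cases k <;> simp only [Matrix.cons_val, Fin.isValue, Fin.reduceFinMk] <;> ring
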